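/- The density (5/6)u₁² + (4/3)u³ obtained from h₂ by setting v ≡ 0 is, after the rescaling u ↦ −(3/5)u, a conserved density of the Kaup–Kupershmidt equation u_t = u₅ + 10uu₃ + 25u₁u₂ + 20u²u₁: concretely, for h = (1/2)u₁² − (4/3)u³, the evolutionary derivative D_t(h) along the Kaup–Kupershmidt equation is a total x-derivative (its variational derivative with respect to u vanishes). -/
import Mathlib


open MvPolynomial

/-- The differential polynomial ring ℚ[u, u₁, u₂, ...]: variable i is uᵢ. -/
abbrev DP1 : Type := MvPolynomial ℕ ℚ

noncomputable def U1' (i : ℕ) : DP1 := X i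

/-- The total derivative Dₓ with Dₓ(uᵢ) = uᵢ₊₁. -/
noncomputable def Dx1 : Derivation ℚ DP1 DP1 := mkDerivation ℚ (fun i => X (i + 1))

noncomputable def DxL1 : DP1 →ₗ[ℚ] DP1 := Dx1.toLinearMap

noncomputable def maxIdx1 (h : DP1) : ℕ := h.vars.sup id

/-- Variational derivative δh/δu = Σₖ(−Dₓ)ᵏ(∂h/∂uₖ). -/
noncomputable def varU1 (h : DP1) : DP1 :=
  ∑ k ∈ Finset.range (maxIdx1 h + 1), ((-DxL1) ^ k) (pderiv k h)

/-- Evolutionary derivation D_t of the Kaup–Kupershmidt equation: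
D_t(uᵢ) = Dₓⁱ(F), F = u₅ + 10uu₃ + 25u₁u₂ + 20u²u₁. -/
noncomputable def DtKK : Derivation ℚ DP1 DP1 :=
  mkDerivation ℚ (fun i => (DxL1 ^ i)
    (U1' 5 + 10 * U1' 0 * U1' 3 + 25 * U1' 1 * U1' 2 + 20 * U1' 0 ^ 2 * U1' 1))

/- ---------- auxiliary lemmas ---------- -/

lemma Dx1_X (i : ℕ) : Dx1 (X i) = X (i + 1) := mkDerivation_X _ _ _

lemma Dx1_ofNat (n : ℕ) [n.AtLeastTwo] : Dx1 (no_index (OfNat.ofNat n) : DP1) = 0 := by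
  rw [← map_ofNat (C : ℚ →+* DP1) n]; exact derivation_C _ _

lemma pderiv_ofNat (k n : ℕ) [n.AtLeastTwo] :
    pderiv k (no_index (OfNat.ofNat n) : DP1) = 0 := by
  rw [← map_ofNat (C : ℚ →+* DP1) n]; exact derivation_C _ _

lemma DtKK_ofNat (n : ℕ) [n.AtLeastTwo] : DtKK (no_index (OfNat.ofNat n) : DP1) = 0 := by
  rw [← map_ofNat (C : ℚ →+* DP1) n]; exact derivation_C _ _

lemma DxL1_apply (p : DP1) : DxL1 p = Dx1 p := rfl

lemma neg_app (p : DP1) : (-DxL1) p = -(Dx1 p) := rfl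

lemma pow_app_succ (f : Module.End ℚ DP1) (n : ℕ) (p : DP1) :
    (f ^ (n + 1)) p = (f ^ n) (f p) := by
  rw [pow_succ, Module.End.mul_apply]

lemma pow_app_zero (f : Module.End ℚ DP1) (p : DP1) : (f ^ 0) p = p := rfl

lemma DtKK_X (i : ℕ) : DtKK (X i) = (DxL1 ^ i)
    (U1' 5 + 10 * U1' 0 * U1' 3 + 25 * U1' 1 * U1' 2 + 20 * U1' 0 ^ 2 * U1' 1) :=
  mkDerivation_X _ _ _

/-- The explicit form of D_t(h) for h = (1/2)u₁² − (4/3)u³. -/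
noncomputable def Pkk : DP1 :=
  ((-80) * X 0 ^ 4 * X 1 + (-40) * X 0 ^ 3 * X 3 + (-80) * X 0 ^ 2 * X 1 * X 2 + (-4) * X 0 ^ 2 * X 5 + (40) * X 0 * X 1 ^ 3 + (10) * X 0 * X 1 * X 4 + (35) * X 1 ^ 2 * X 3 + (25) * X 1 * X 2 ^ 2 + X 1 * X 6 : DP1)

lemma Dt_h_eq : DtKK ((1/2 : ℚ) • (U1' 1 ^ 2) - (4/3 : ℚ) • (U1' 0 ^ 3)) = Pkk := by
  have hH : ((1/2 : ℚ) • (U1' 1 ^ 2) - (4/3 : ℚ) • (U1' 0 ^ 3))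
      = (1/6 : ℚ) • ((3 : DP1) * X 1 ^ 2 - (8 : DP1) * X 0 ^ 3) := by
    rw [show (3 : DP1) = C (3:ℚ) from (map_ofNat C 3).symm,
        show (8 : DP1) = C (8:ℚ) from (map_ofNat C 8).symm]
    simp only [U1', smul_sub, smul_eq_C_mul, ← mul_assoc, ← map_mul]
    norm_num
  have hDH : DtKK ((3 : DP1) * X 1 ^ 2 - (8 : DP1) * X 0 ^ 3) = (6 : DP1) * Pkk := by
    simp only [map_sub, DtKK_X, U1']
    simp [Derivation.leibniz, Derivation.leibniz_pow, DtKK_X, U1', Dx1_X, Dx1_ofNat, DtKK_ofNat,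
      smul_eq_mul, nsmul_eq_mul, pow_one, Module.End.one_apply, DxL1_apply, Pkk]
    try ring
  rw [hH, Derivation.map_smul, hDH,
      show ((6 : DP1) * Pkk) = (6:ℚ) • Pkk from by rw [smul_eq_C_mul, map_ofNat],
      smul_smul]
  norm_num

lemma pd0 : pderiv 0 Pkk = ((-320) * X 0 ^ 3 * X 1 + (-120) * X 0 ^ 2 * X 3 + (-160) * X 0 * X 1 * X 2 + (-8) * X 0 * X 5 + (40) * X 1 ^ 3 + (10) * X 1 * X 4 : DP1) := by
  simp [Pkk, pderiv_mul, pderiv_pow, pderiv_ofNat, Pi.single_apply]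
  try ring

lemma pd1 : pderiv 1 Pkk = ((-80) * X 0 ^ 4 + (-80) * X 0 ^ 2 * X 2 + (120) * X 0 * X 1 ^ 2 + (10) * X 0 * X 4 + (70) * X 1 * X 3 + (25) * X 2 ^ 2 + X 6 : DP1) := by
  simp [Pkk, pderiv_mul, pderiv_pow, pderiv_ofNat, Pi.single_apply]
  try ring

lemma dx1_0 : Dx1 ((-80) * X 0 ^ 4 + (-80) * X 0 ^ 2 * X 2 + (120) * X 0 * X 1 ^ 2 + (10) * X 0 * X 4 + (70) * X 1 * X 3 + (25) * X 2 ^ 2 + X 6 : DP1) = ((-320) * X 0 ^ 3 * X 1 + (-80) * X 0 ^ 2 * X 3 + (80) * X 0 * X 1 * X 2 + (10) * X 0 * X 5 + (120) * X 1 ^ 3 + (80) * X 1 * X 4 + (120) * X 2 * X 3 + X 7 : DP1) := by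
  simp [Derivation.leibniz, Derivation.leibniz_pow, Dx1_X, Dx1_ofNat, smul_eq_mul, nsmul_eq_mul]
  try ring

lemma pd2 : pderiv 2 Pkk = ((-80) * X 0 ^ 2 * X 1 + (50) * X 1 * X 2 : DP1) := by
  simp [Pkk, pderiv_mul, pderiv_pow, pderiv_ofNat, Pi.single_apply]
  try ring

lemma dx2_0 : Dx1 ((-80) * X 0 ^ 2 * X 1 + (50) * X 1 * X 2 : DP1) = ((-80) * X 0 ^ 2 * X 2 + (-160) * X 0 * X 1 ^ 2 + (50) * X 1 * X 3 + (50) * X 2 ^ 2 : DP1) := by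
  simp [Derivation.leibniz, Derivation.leibniz_pow, Dx1_X, Dx1_ofNat, smul_eq_mul, nsmul_eq_mul]
  try ring

lemma dx2_1 : Dx1 ((-80) * X 0 ^ 2 * X 2 + (-160) * X 0 * X 1 ^ 2 + (50) * X 1 * X 3 + (50) * X 2 ^ 2 : DP1) = ((-80) * X 0 ^ 2 * X 3 + (-480) * X 0 * X 1 * X 2 + (-160) * X 1 ^ 3 + (50) * X 1 * X 4 + (150) * X 2 * X 3 : DP1) := by
  simp [Derivation.leibniz, Derivation.leibniz_pow, Dx1_X, Dx1_ofNat, smul_eq_mul, nsmul_eq_mul]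
  try ring

lemma pd3 : pderiv 3 Pkk = ((-40) * X 0 ^ 3 + (35) * X 1 ^ 2 : DP1) := by
  simp [Pkk, pderiv_mul, pderiv_pow, pderiv_ofNat, Pi.single_apply]
  try ring

lemma dx3_0 : Dx1 ((-40) * X 0 ^ 3 + (35) * X 1 ^ 2 : DP1) = ((-120) * X 0 ^ 2 * X 1 + (70) * X 1 * X 2 : DP1) := by
  simp [Derivation.leibniz, Derivation.leibniz_pow, Dx1_X, Dx1_ofNat, smul_eq_mul, nsmul_eq_mul]
  try ring

lemma dx3_1 : Dx1 ((-120) * X 0 ^ 2 * X 1 + (70) * X 1 * X 2 : DP1) = ((-120) * X 0 ^ 2 * X 2 + (-240) * X 0 * X 1 ^ 2 + (70) * X 1 * X 3 + (70) * X 2 ^ 2 : DP1) := by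
  simp [Derivation.leibniz, Derivation.leibniz_pow, Dx1_X, Dx1_ofNat, smul_eq_mul, nsmul_eq_mul]
  try ring

lemma dx3_2 : Dx1 ((-120) * X 0 ^ 2 * X 2 + (-240) * X 0 * X 1 ^ 2 + (70) * X 1 * X 3 + (70) * X 2 ^ 2 : DP1) = ((-120) * X 0 ^ 2 * X 3 + (-720) * X 0 * X 1 * X 2 + (-240) * X 1 ^ 3 + (70) * X 1 * X 4 + (210) * X 2 * X 3 : DP1) := by
  simp [Derivation.leibniz, Derivation.leibniz_pow, Dx1_X, Dx1_ofNat, smul_eq_mul, nsmul_eq_mul]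
  try ring

lemma pd4 : pderiv 4 Pkk = ((10) * X 0 * X 1 : DP1) := by
  simp [Pkk, pderiv_mul, pderiv_pow, pderiv_ofNat, Pi.single_apply]
  try ring

lemma dx4_0 : Dx1 ((10) * X 0 * X 1 : DP1) = ((10) * X 0 * X 2 + (10) * X 1 ^ 2 : DP1) := by
  simp [Derivation.leibniz, Derivation.leibniz_pow, Dx1_X, Dx1_ofNat, smul_eq_mul, nsmul_eq_mul]
  try ring

lemma dx4_1 : Dx1 ((10) * X 0 * X 2 + (10) * X 1 ^ 2 : DP1) = ((10) * X 0 * X 3 + (30) * X 1 * X 2 : DP1) := by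
  simp [Derivation.leibniz, Derivation.leibniz_pow, Dx1_X, Dx1_ofNat, smul_eq_mul, nsmul_eq_mul]
  try ring

lemma dx4_2 : Dx1 ((10) * X 0 * X 3 + (30) * X 1 * X 2 : DP1) = ((10) * X 0 * X 4 + (40) * X 1 * X 3 + (30) * X 2 ^ 2 : DP1) := by
  simp [Derivation.leibniz, Derivation.leibniz_pow, Dx1_X, Dx1_ofNat, smul_eq_mul, nsmul_eq_mul]
  try ring

lemma dx4_3 : Dx1 ((10) * X 0 * X 4 + (40) * X 1 * X 3 + (30) * X 2 ^ 2 : DP1) = ((10) * X 0 * X 5 + (50) * X 1 * X 4 + (100) * X 2 * X 3 : DP1) := by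
  simp [Derivation.leibniz, Derivation.leibniz_pow, Dx1_X, Dx1_ofNat, smul_eq_mul, nsmul_eq_mul]
  try ring

lemma pd5 : pderiv 5 Pkk = ((-4) * X 0 ^ 2 : DP1) := by
  simp [Pkk, pderiv_mul, pderiv_pow, pderiv_ofNat, Pi.single_apply]
  try ring

lemma dx5_0 : Dx1 ((-4) * X 0 ^ 2 : DP1) = ((-8) * X 0 * X 1 : DP1) := by
  simp [Derivation.leibniz, Derivation.leibniz_pow, Dx1_X, Dx1_ofNat, smul_eq_mul, nsmul_eq_mul]
  try ring

lemma dx5_1 : Dx1 ((-8) * X 0 * X 1 : DP1) = ((-8) * X 0 * X 2 + (-8) * X 1 ^ 2 : DP1) := by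
  simp [Derivation.leibniz, Derivation.leibniz_pow, Dx1_X, Dx1_ofNat, smul_eq_mul, nsmul_eq_mul]
  try ring

lemma dx5_2 : Dx1 ((-8) * X 0 * X 2 + (-8) * X 1 ^ 2 : DP1) = ((-8) * X 0 * X 3 + (-24) * X 1 * X 2 : DP1) := by
  simp [Derivation.leibniz, Derivation.leibniz_pow, Dx1_X, Dx1_ofNat, smul_eq_mul, nsmul_eq_mul]
  try ring

lemma dx5_3 : Dx1 ((-8) * X 0 * X 3 + (-24) * X 1 * X 2 : DP1) = ((-8) * X 0 * X 4 + (-32) * X 1 * X 3 + (-24) * X 2 ^ 2 : DP1) := by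
  simp [Derivation.leibniz, Derivation.leibniz_pow, Dx1_X, Dx1_ofNat, smul_eq_mul, nsmul_eq_mul]
  try ring

lemma dx5_4 : Dx1 ((-8) * X 0 * X 4 + (-32) * X 1 * X 3 + (-24) * X 2 ^ 2 : DP1) = ((-8) * X 0 * X 5 + (-40) * X 1 * X 4 + (-80) * X 2 * X 3 : DP1) := by
  simp [Derivation.leibniz, Derivation.leibniz_pow, Dx1_X, Dx1_ofNat, smul_eq_mul, nsmul_eq_mul]
  try ring

lemma pd6 : pderiv 6 Pkk = (X 1 : DP1) := by
  simp [Pkk, pderiv_mul, pderiv_pow, pderiv_ofNat, Pi.single_apply]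
  try ring

lemma dx6_0 : Dx1 (X 1 : DP1) = (X 2 : DP1) := by
  simp [Derivation.leibniz, Derivation.leibniz_pow, Dx1_X, Dx1_ofNat, smul_eq_mul, nsmul_eq_mul]
  try ring

lemma dx6_1 : Dx1 (X 2 : DP1) = (X 3 : DP1) := by
  simp [Derivation.leibniz, Derivation.leibniz_pow, Dx1_X, Dx1_ofNat, smul_eq_mul, nsmul_eq_mul]
  try ring

lemma dx6_2 : Dx1 (X 3 : DP1) = (X 4 : DP1) := by
  simp [Derivation.leibniz, Derivation.leibniz_pow, Dx1_X, Dx1_ofNat, smul_eq_mul, nsmul_eq_mul]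
  try ring

lemma dx6_3 : Dx1 (X 4 : DP1) = (X 5 : DP1) := by
  simp [Derivation.leibniz, Derivation.leibniz_pow, Dx1_X, Dx1_ofNat, smul_eq_mul, nsmul_eq_mul]
  try ring

lemma dx6_4 : Dx1 (X 5 : DP1) = (X 6 : DP1) := by
  simp [Derivation.leibniz, Derivation.leibniz_pow, Dx1_X, Dx1_ofNat, smul_eq_mul, nsmul_eq_mul]
  try ring

lemma dx6_5 : Dx1 (X 6 : DP1) = (X 7 : DP1) := by
  simp [Derivation.leibniz, Derivation.leibniz_pow, Dx1_X, Dx1_ofNat, smul_eq_mul, nsmul_eq_mul]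
  try ring

lemma varU1_Pkk : varU1 Pkk = 0 := by
  unfold varU1
  have key : ∑ k ∈ Finset.range (maxIdx1 Pkk + 1), ((-DxL1) ^ k) (pderiv k Pkk)
      = ∑ k ∈ Finset.range (max (maxIdx1 Pkk + 1) 7), ((-DxL1) ^ k) (pderiv k Pkk) := by
    apply Finset.sum_subset (Finset.range_subset_range.mpr (le_max_left _ _))
    intro k _ hk
    have hk' : maxIdx1 Pkk < k := by
      simp only [Finset.mem_range, not_lt] at hk; omega
    have hv : k ∉ Pkk.vars := by
      intro hm
      have h2 := Finset.le_sup (f := id) hm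
      simp only [id] at h2
      exact absurd h2 (by unfold maxIdx1 at hk'; omega)
    rw [pderiv_eq_zero_of_notMem_vars hv, map_zero]
  have key2 : ∑ k ∈ Finset.range (max (maxIdx1 Pkk + 1) 7), ((-DxL1) ^ k) (pderiv k Pkk)
      = ∑ k ∈ Finset.range 7, ((-DxL1) ^ k) (pderiv k Pkk) := by
    symm
    apply Finset.sum_subset (Finset.range_subset_range.mpr (le_max_right _ _))
    intro k hk1 hk
    have h7 : 7 ≤ k := by simp only [Finset.mem_range, not_lt] at hk; omega
    have h0 : (0:ℕ) ≠ k := by omega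
    have h1 : (1:ℕ) ≠ k := by omega
    have h2 : (2:ℕ) ≠ k := by omega
    have h3 : (3:ℕ) ≠ k := by omega
    have h4 : (4:ℕ) ≠ k := by omega
    have h5 : (5:ℕ) ≠ k := by omega
    have h6 : (6:ℕ) ≠ k := by omega
    have hz : pderiv k Pkk = 0 := by
      simp [Pkk, pderiv_mul, pderiv_pow, pderiv_ofNat, pderiv_X_of_ne, h0, h1, h2, h3, h4, h5, h6]
    rw [hz, map_zero]
  rw [key, key2]
  simp only [Finset.sum_range_succ, Finset.sum_range_zero, zero_add]
  rw [pd0, pd1, pd2, pd3, pd4, pd5, pd6]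
  simp only [pow_app_succ, pow_app_zero]
  simp only [neg_app]
  simp only [map_neg, neg_neg]
  simp only [dx1_0, dx2_0, dx2_1, dx3_0, dx3_1, dx3_2, dx4_0, dx4_1, dx4_2, dx4_3, dx5_0, dx5_1, dx5_2, dx5_3, dx5_4, dx6_0, dx6_1, dx6_2, dx6_3, dx6_4, dx6_5]
  ring

/-- h = (1/2)u₁² − (4/3)u³ is a conserved density of the
Kaup–Kupershmidt equation: δ(D_t h)/δu = 0. -/
theorem KK_conserved_density :
    varU1 (DtKK ((1/2 : ℚ) • (U1' 1 ^ 2) - (4/3 : ℚ) • (U1' 0 ^ 3))) = 0 := by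
  rw [Dt_h_eq]; exact varU1_Pkk
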